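/- arXiv:1311.7113 — 5 statements merged into one kernel-verified Lean document; each statement's English description precedes it below -/
import Mathlib

section
/- Let M = {v_1^{m_1}, v_2^{m_2}, ..., v_ℓ^{m_ℓ}} be a multiset with distinct ranks v_1 < v_2 < ... < v_ℓ and multiplicities m_1, ..., m_ℓ, let n_0 = 0 and n_i = m_1 + ... + m_i, and for each i let θ_i be a permutation of the interval [n_{i-1}+1, n_i]. Then for every two multi-permutations σ, π ∈ S(M), the Kendall τ-distance is preserved under the substitution map T_θ: d_K(σ, π) = d_K(T_θ(σ), T_θ(π)). -/
/-- `AdjTrans σ π` : the sequence `π` is obtained from the sequence `σ` by exchanging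
two distinct adjacent elements (an adjacent transposition). -/
def AdjTrans (σ π : List ℤ) : Prop :=
  ∃ (l₁ l₂ : List ℤ) (a b : ℤ), a ≠ b ∧ σ = l₁ ++ a :: b :: l₂ ∧ π = l₁ ++ b :: a :: l₂

/-- `StepsTo n σ π` : `π` can be obtained from `σ` by a sequence of `n` adjacent
transpositions. -/
def StepsTo : ℕ → List ℤ → List ℤ → Prop
  | 0 => fun σ π => σ = π
  | n + 1 => fun σ π => ∃ τ, AdjTrans σ τ ∧ StepsTo n τ π

/-- The Kendall τ-distance between two sequences: the minimum number of adjacent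
transpositions needed to transform one into the other. -/
noncomputable def dK (σ π : List ℤ) : ℕ := sInf {n | StepsTo n σ π}

/-- The list `[a, a+1, ..., a+len-1]` of integers. -/
def rangeList (a len : ℕ) : List ℤ := (List.range' a len).map (fun x => (x : ℤ))

/-- The substitution map `T_θ`: the `r`-th occurrence (from the left, `0`-indexed) of a
rank `a` in `σ` is replaced by the `r`-th entry of the list `θ a`. -/
def Tmap (θ : ℤ → List ℤ) (σ : List ℤ) : List ℤ :=
  (List.range σ.length).map (fun j =>
    (θ (σ.getD j 0)).getD ((σ.take j).count (σ.getD j 0)) 0)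

/-- `psiEntry σ a s` : the number of positions in `σ` strictly to the right of the `s`-th
occurrence (`0`-indexed) of `a` in `σ` that hold an element smaller than `a`. -/
def psiEntry (σ : List ℤ) (a : ℤ) (s : ℕ) : ℕ :=
  (σ.drop (((σ.indexesOf a).getD s σ.length) + 1)).countP (fun x => decide (x < a))

/-- The Manhattan distance between two vectors of naturals (presented as lists). -/
def manhattanL (x y : List ℕ) : ℕ :=
  ∑ i ∈ Finset.range (max x.length y.length), ((x.getD i 0 : ℤ) - (y.getD i 0 : ℤ)).natAbs

/-- The Lee distance over `Z_q` between two vectors with entries in `{0, …, q-1}`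
(presented as lists). -/
def leeDistL (q : ℕ) (x y : List ℕ) : ℕ :=
  ∑ i ∈ Finset.range (max x.length y.length),
    min (((x.getD i 0 : ℤ) - (y.getD i 0 : ℤ)).natAbs)
      (q - ((x.getD i 0 : ℤ) - (y.getD i 0 : ℤ)).natAbs)

/-- The Lee distance between two vectors over `ZMod q`. -/
def zmodLee {q N : ℕ} (x y : Fin N → ZMod q) : ℕ :=
  ∑ i, min (x i - y i).val (y i - x i).val

/-- `permList k σ` : `σ` is (an ordering representing) a permutation of `{1, …, k}`. -/
def permList (k : ℕ) (σ : List ℤ) : Prop :=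
  (↑σ : Multiset ℤ) = (↑(rangeList 1 k) : Multiset ℤ)

/-- The multiset `M_{k,r} = {0^k, k+1, …, k+r}`. -/
def Mkr (k r : ℕ) : Multiset ℤ :=
  Multiset.replicate k (0 : ℤ) + (↑(rangeList (k + 1) r) : Multiset ℤ)

/-- `α_{↓k}` : delete from `α` all elements larger than `k`. -/
def restrictTo (k : ℕ) (α : List ℤ) : List ℤ :=
  α.filter (fun x => decide (x ≤ (k : ℤ)))

/-- `α_{k↦0}` : replace in `α` every element of `{1, …, k}` by `0`. -/
def mapToZero (k : ℕ) (α : List ℤ) : List ℤ :=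
  α.map (fun x => if 1 ≤ x ∧ x ≤ (k : ℤ) then 0 else x)

/-- `star σ ρ = σ ∗ ρ` : replace the zeros of `ρ`, from left to right, by the elements
of `σ` in order. -/
def starP : List ℤ → List ℤ → List ℤ
  | _, [] => []
  | σ, x :: ρ' => if x = 0 then σ.headD 0 :: starP σ.tail ρ' else x :: starP σ ρ'

/-! An adjacent transposition of two distinct ranks `a, b` becomes an adjacent transposition
of the labels currently assigned to them by `T_θ`, which differ because the blocks `θ a` and
`θ b` are disjoint; so `T_θ` does not increase distances. Conversely, collapsing every label
back to its rank is a letterwise map `c` with `map c ∘ T_θ = id` on `S(M)`, and a letterwise map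
sends each adjacent transposition to one or to none. -/

lemma Tmap_cons (θ : ℤ → List ℤ) (a : ℤ) (s : List ℤ) :
    Tmap θ (a :: s) = (θ a).getD 0 0 :: Tmap (Function.update θ a (θ a).tail) s := by
  unfold Tmap
  simp only [List.length_cons, List.range_succ_eq_map, List.map_cons, List.map_map]
  refine congrArg₂ List.cons (by simp) (List.map_congr_left fun j _ => ?_)
  simp only [Function.comp_apply, List.getD_cons_succ, List.take_succ_cons, List.count_cons]
  by_cases h : s.getD j 0 = a
  · cases s <;> simp_all [List.getD]
  · rw [Function.update_of_ne h, if_neg (by simpa using Ne.symm h), Nat.add_zero]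

namespace AdjTrans

lemma perm {σ π : List ℤ} (h : AdjTrans σ π) : σ.Perm π := by
  obtain ⟨l₁, l₂, a, b, -, rfl, rfl⟩ := h
  exact (List.Perm.swap b a l₂).append_left l₁

lemma cons {σ π : List ℤ} (x : ℤ) (h : AdjTrans σ π) : AdjTrans (x :: σ) (x :: π) := by
  obtain ⟨l₁, l₂, a, b, hab, rfl, rfl⟩ := h
  exact ⟨x :: l₁, l₂, a, b, hab, rfl, rfl⟩

end AdjTrans

def IsRelabeling (c : ℤ → ℤ) (θ : ℤ → List ℤ) (σ : List ℤ) : Prop :=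
  ∀ a ∈ σ, σ.count a ≤ (θ a).length ∧ ∀ x ∈ θ a, c x = a

namespace IsRelabeling

variable {c : ℤ → ℤ} {θ : ℤ → List ℤ}

lemma of_perm {σ τ : List ℤ} (h : IsRelabeling c θ σ) (hp : σ.Perm τ) : IsRelabeling c θ τ := by
  intro a ha
  rw [← hp.count_eq]
  exact h a (hp.mem_iff.mpr ha)

lemma tail {a : ℤ} {s : List ℤ} (h : IsRelabeling c θ (a :: s)) :
    IsRelabeling c (Function.update θ a (θ a).tail) s := by
  intro b hb
  obtain ⟨hcount, hlabel⟩ := h b (List.mem_cons_of_mem a hb)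
  rw [List.count_cons] at hcount
  by_cases hba : b = a
  · subst hba
    simp only [Function.update_self, List.length_tail, beq_self_eq_true, if_true] at hcount ⊢
    exact ⟨by omega, fun x hx => hlabel x (List.mem_of_mem_tail hx)⟩
  · rw [Function.update_of_ne hba]
    exact ⟨by omega, hlabel⟩

lemma head_mem {σ : List ℤ} (h : IsRelabeling c θ σ) {a : ℤ} (ha : a ∈ σ) :
    (θ a).getD 0 0 ∈ θ a := by
  have hpos := List.count_pos_iff.mpr ha
  cases hθ : θ a with
  | nil => have := (h a ha).1; simp [hθ] at this; omega
  | cons x t => simp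

lemma collapse_head {σ : List ℤ} (h : IsRelabeling c θ σ) {a : ℤ} (ha : a ∈ σ) :
    c ((θ a).getD 0 0) = a :=
  (h a ha).2 _ (h.head_mem ha)

end IsRelabeling

lemma map_Tmap_of_isRelabeling {c : ℤ → ℤ} :
    ∀ {θ : ℤ → List ℤ} {σ : List ℤ}, IsRelabeling c θ σ → (Tmap θ σ).map c = σ
  | _, [], _ => rfl
  | _, a :: _, h => by
    rw [Tmap_cons, List.map_cons, map_Tmap_of_isRelabeling h.tail,
      h.collapse_head List.mem_cons_self]

lemma AdjTrans.Tmap_of_isRelabeling {c : ℤ → ℤ} {a b : ℤ} (hab : a ≠ b) (l₂ : List ℤ) :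
    ∀ (l₁ : List ℤ) {θ : ℤ → List ℤ}, IsRelabeling c θ (l₁ ++ a :: b :: l₂) →
      AdjTrans (Tmap θ (l₁ ++ a :: b :: l₂)) (Tmap θ (l₁ ++ b :: a :: l₂))
  | [], θ, h => by
    simp only [List.nil_append, Tmap_cons, Function.update_of_ne hab.symm,
      Function.update_of_ne hab, Function.update_comm hab]
    have hlabels : (θ a).getD 0 0 ≠ (θ b).getD 0 0 := fun he => hab <| by
      rw [← h.collapse_head (a := a) (by simp), he, h.collapse_head (by simp)]
    exact ⟨[], _, _, _, hlabels, rfl, rfl⟩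
  | x :: l₁, θ, h => by
    simp only [List.cons_append, Tmap_cons]
    exact (AdjTrans.Tmap_of_isRelabeling hab l₂ l₁ h.tail).cons _

lemma StepsTo.Tmap_of_isRelabeling {c : ℤ → ℤ} {θ : ℤ → List ℤ} :
    ∀ {n : ℕ} {σ π : List ℤ}, IsRelabeling c θ σ → StepsTo n σ π →
      StepsTo n (Tmap θ σ) (Tmap θ π)
  | 0, _, _, _, hst => congrArg _ hst
  | _ + 1, _, _, h, ⟨τ, hadj, hst⟩ => by
    refine ⟨Tmap θ τ, ?_, StepsTo.Tmap_of_isRelabeling (h.of_perm hadj.perm) hst⟩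
    obtain ⟨l₁, l₂, a, b, hab, rfl, rfl⟩ := hadj
    exact AdjTrans.Tmap_of_isRelabeling hab l₂ l₁ h

lemma StepsTo.exists_le_map (c : ℤ → ℤ) :
    ∀ {n : ℕ} {σ π : List ℤ}, StepsTo n σ π → ∃ k ≤ n, StepsTo k (σ.map c) (π.map c)
  | 0, _, _, hst => ⟨0, le_rfl, congrArg _ hst⟩
  | n + 1, _, _, ⟨τ, hadj, hst⟩ => by
    obtain ⟨l₁, l₂, a, b, -, rfl, rfl⟩ := hadj
    obtain ⟨k, hk, hsteps⟩ := StepsTo.exists_le_map c hst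
    by_cases hc : c a = c b
    · exact ⟨k, by omega, by simpa [hc] using hsteps⟩
    · exact ⟨k + 1, by omega, _, ⟨l₁.map c, l₂.map c, c a, c b, hc, by simp, by simp⟩, hsteps⟩

lemma Nat.sInf_eq_of_subset_of_forall_exists_le {S T : Set ℕ} (hST : S ⊆ T)
    (hTS : ∀ n ∈ T, ∃ k ≤ n, k ∈ S) : sInf S = sInf T := by
  rcases T.eq_empty_or_nonempty with hT | hT
  · have hS : S = ∅ := Set.subset_empty_iff.mp (hT ▸ hST)
    rw [hS, hT]
  obtain ⟨k, hk, hkS⟩ := hTS _ (Nat.sInf_mem hT)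
  exact le_antisymm ((Nat.sInf_le hkS).trans hk) (Nat.sInf_le (hST (Nat.sInf_mem ⟨k, hkS⟩)))

theorem dK_Tmap_of_isRelabeling {c : ℤ → ℤ} {θ : ℤ → List ℤ} {σ π : List ℤ}
    (hσ : IsRelabeling c θ σ) (hπ : IsRelabeling c θ π) :
    dK (Tmap θ σ) (Tmap θ π) = dK σ π := by
  refine (Nat.sInf_eq_of_subset_of_forall_exists_le (fun _ => StepsTo.Tmap_of_isRelabeling hσ)
    fun n hn => ?_).symm
  obtain ⟨k, hk, hsteps⟩ := StepsTo.exists_le_map c hn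
  rw [map_Tmap_of_isRelabeling hσ, map_Tmap_of_isRelabeling hπ] at hsteps
  exact ⟨k, hk, hsteps⟩

lemma exists_collapse_of_pairwise_disjoint {θ : ℤ → List ℤ} {s : Set ℤ}
    (hs : s.Pairwise fun a b => (θ a).Disjoint (θ b)) :
    ∃ c : ℤ → ℤ, ∀ a ∈ s, ∀ x ∈ θ a, c x = a := by
  classical
  refine ⟨fun x => if h : ∃ a ∈ s, x ∈ θ a then h.choose else x, fun a ha x hx => ?_⟩
  have hex : ∃ a ∈ s, x ∈ θ a := ⟨a, ha, hx⟩
  obtain ⟨hbs, hxb⟩ := hex.choose_spec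
  dsimp only
  rw [dif_pos hex]
  by_contra hne
  exact hs hbs ha hne hxb hx

-- The coercion in `rangeList` elaborates through the list monad, as a `flatMap`.
lemma rangeList_eq_map (a len : ℕ) : rangeList a len = (List.range' a len).map Nat.cast := by
  simp [rangeList, List.map_eq_flatMap]

lemma rangeList_disjoint {a k b l : ℕ} (h : a + k ≤ b) :
    (rangeList a k).Disjoint (rangeList b l) := by
  intro x hxa hxb
  simp only [rangeList_eq_map, List.mem_map, List.mem_range'_1] at hxa hxb
  omega

lemma rangeList_partialSum_disjoint (m : ℕ → ℕ) {i j : ℕ} (hij : i ≠ j) :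
    (rangeList (∑ k ∈ Finset.range i, m k + 1) (m i)).Disjoint
      (rangeList (∑ k ∈ Finset.range j, m k + 1) (m j)) := by
  wlog h : i < j generalizing i j
  · exact (this hij.symm (by omega)).symm
  refine rangeList_disjoint ?_
  have : ∑ k ∈ Finset.range (i + 1), m k ≤ ∑ k ∈ Finset.range j, m k :=
    Finset.sum_le_sum_of_subset (Finset.range_subset_range.mpr h)
  rw [Finset.sum_range_succ] at this
  omega

lemma Multiset.count_sum_replicate {ι α : Type*} [DecidableEq α] {s : Finset ι} {v : ι → α}
    {m : ι → ℕ} (hv : Set.InjOn v s) {i : ι} (hi : i ∈ s) :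
    (∑ j ∈ s, Multiset.replicate (m j) (v j)).count (v i) = m i := by
  rw [Multiset.count_sum', Finset.sum_eq_single_of_mem i hi fun j hj hji => ?_]
  · simp
  · rw [Multiset.count_replicate, if_neg fun h => hji (hv hj hi h)]

theorem stmt0_general (ℓ : ℕ) (v : ℕ → ℤ) (m : ℕ → ℕ)
    (hv : ∀ i j, i < j → j < ℓ → v i < v j)
    (θ : ℤ → List ℤ)
    (hθ : ∀ i, i < ℓ → (↑(θ (v i)) : Multiset ℤ) =
      (↑(rangeList ((∑ j ∈ Finset.range i, m j) + 1) (m i)) : Multiset ℤ))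
    (σ π : List ℤ)
    (hσ : (↑σ : Multiset ℤ) = ∑ i ∈ Finset.range ℓ, Multiset.replicate (m i) (v i))
    (hπ : (↑π : Multiset ℤ) = ∑ i ∈ Finset.range ℓ, Multiset.replicate (m i) (v i)) :
    dK σ π = dK (Tmap θ σ) (Tmap θ π) := by
  have hinj : Set.InjOn v (Finset.range ℓ) :=
    StrictMonoOn.injOn fun i _ j hj hij => hv i j hij (Finset.mem_range.mp hj)
  have hperm : ∀ i < ℓ, (θ (v i)).Perm (rangeList ((∑ j ∈ Finset.range i, m j) + 1) (m i)) :=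
    fun i hi => Multiset.coe_eq_coe.mp (hθ i hi)
  obtain ⟨c, hc⟩ := exists_collapse_of_pairwise_disjoint
    (s := v '' Set.Iio ℓ) <| by
    rintro _ ⟨i, hi, rfl⟩ _ ⟨j, hj, rfl⟩ hij
    exact ((hperm i hi).disjoint_left.mpr ((hperm j hj).disjoint_right.mpr
      (rangeList_partialSum_disjoint m fun h => hij (congrArg v h))))
  have hrel : ∀ ρ : List ℤ,
      (ρ : Multiset ℤ) = ∑ i ∈ Finset.range ℓ, Multiset.replicate (m i) (v i) →
      IsRelabeling c θ ρ := by
    intro ρ hρ a ha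
    obtain ⟨i, hi, ha⟩ := Multiset.mem_sum.mp (hρ ▸ Multiset.mem_coe.mpr ha)
    obtain rfl := (Multiset.mem_replicate.mp ha).2
    refine ⟨?_, hc _ ⟨i, Finset.mem_range.mp hi, rfl⟩⟩
    rw [← Multiset.coe_count, hρ, Multiset.count_sum_replicate hinj hi,
      (hperm i (Finset.mem_range.mp hi)).length_eq, rangeList_eq_map, List.length_map,
      List.length_range']
  exact (dK_Tmap_of_isRelabeling (hrel σ hσ) (hrel π hπ)).symm

/-- Lemma 1. Let `M = {v 0 ^ m 0, …, v (ℓ-1) ^ m (ℓ-1)}` be a multiset with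
distinct ranks `v 0 < v 1 < … < v (ℓ-1)` and positive multiplicities, and for each `i < ℓ`
let `θ (v i)` be a permutation of the interval `[n_{i-1}+1, n_i]` (where `n_i` is the sum of
the first `i` multiplicities).  Then for every two multi-permutations `σ, π ∈ S(M)`,
`d_K(σ, π) = d_K(T_θ(σ), T_θ(π))`. -/
theorem stmt0 (ℓ : ℕ) (v : ℕ → ℤ) (m : ℕ → ℕ)
    (hv : ∀ i j, i < j → j < ℓ → v i < v j)
    (hm : ∀ i, i < ℓ → 0 < m i)
    (θ : ℤ → List ℤ)
    (hθ : ∀ i, i < ℓ → (↑(θ (v i)) : Multiset ℤ) =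
      (↑(rangeList ((∑ j ∈ Finset.range i, m j) + 1) (m i)) : Multiset ℤ))
    (σ π : List ℤ)
    (hσ : (↑σ : Multiset ℤ) = ∑ i ∈ Finset.range ℓ, Multiset.replicate (m i) (v i))
    (hπ : (↑π : Multiset ℤ) = ∑ i ∈ Finset.range ℓ, Multiset.replicate (m i) (v i)) :
    dK σ π = dK (Tmap θ σ) (Tmap θ π) :=
  stmt0_general ℓ v m hv θ hθ σ π hσ hπ
end

section
/- If σ, π, and ρ are three multi-permutations in S(M), then d_K(σ, π) + d_K(π, ρ) ≡ d_K(σ, ρ) (mod 2). -/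
/-!
The number of inversions changes by exactly one under an adjacent transposition of distinct
elements, so any sequence of `n` such transpositions from `σ` to `π` has
`n ≡ inv σ + inv π (mod 2)`. Applied to the minimal sequences this gives
`d_K(σ, π) ≡ inv σ + inv π`, and the three congruences add up to the claim.
-/

section Inversions

variable {α : Type*} [LinearOrder α]

def invCount : List α → ℕ
  | [] => 0
  | a :: l => l.countP (· < a) + invCount l

/-- Permuting a suffix changes only the inversions inside it. -/
theorem invCount_append_add_of_perm (l : List α) {t₁ t₂ : List α} (ht : t₁.Perm t₂) :
    invCount (l ++ t₁) + invCount t₂ = invCount (l ++ t₂) + invCount t₁ := by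
  induction l with
  | nil => exact Nat.add_comm _ _
  | cons x l ih =>
    simp only [List.cons_append, invCount, List.countP_append, ht.countP_eq]
    omega

theorem invCount_swap_add_mod_two {a b : α} (hab : a ≠ b) (l : List α) :
    (invCount (a :: b :: l) + invCount (b :: a :: l)) % 2 = 1 := by
  rcases hab.lt_or_gt with h | h <;>
    simp [invCount, h, h.not_gt] <;> omega

theorem invCount_adjacent_swap_add_mod_two (l₁ l₂ : List α) {a b : α} (hab : a ≠ b) :
    (invCount (l₁ ++ a :: b :: l₂) + invCount (l₁ ++ b :: a :: l₂)) % 2 = 1 := by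
  have := invCount_append_add_of_perm l₁ (List.Perm.swap b a l₂)
  have := invCount_swap_add_mod_two hab l₂
  omega

end Inversions

theorem AdjTrans.invCount_add_mod_two {σ π : List ℤ} (h : AdjTrans σ π) :
    (invCount σ + invCount π) % 2 = 1 := by
  obtain ⟨l₁, l₂, a, b, hab, rfl, rfl⟩ := h
  exact invCount_adjacent_swap_add_mod_two l₁ l₂ hab

theorem StepsTo.add_invCount_mod_two :
    ∀ {n : ℕ} {σ π : List ℤ}, StepsTo n σ π → (n + invCount σ + invCount π) % 2 = 0
  | 0, _, _, rfl => by omega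
  | _ + 1, _, _, ⟨_, hadj, hsteps⟩ => by
    have := hadj.invCount_add_mod_two
    have := hsteps.add_invCount_mod_two
    omega

theorem StepsTo.trans :
    ∀ {m n : ℕ} {σ τ π : List ℤ}, StepsTo m σ τ → StepsTo n τ π → StepsTo (m + n) σ π
  | 0, _, _, _, _, rfl, h => by simpa using h
  | m + 1, n, _, _, _, ⟨τ', hadj, hsteps⟩, h => by
    rw [Nat.add_right_comm]
    exact ⟨τ', hadj, hsteps.trans h⟩

theorem StepsTo.cons (x : ℤ) :
    ∀ {n : ℕ} {σ π : List ℤ}, StepsTo n σ π → StepsTo n (x :: σ) (x :: π)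
  | 0, _, _, rfl => rfl
  | _ + 1, _, _, ⟨_, ⟨l₁, l₂, a, b, hab, h₁, h₂⟩, hsteps⟩ =>
    ⟨_, ⟨x :: l₁, l₂, a, b, hab, by simp [h₁], by simp [h₂]⟩, hsteps.cons x⟩

theorem exists_stepsTo_of_perm {σ π : List ℤ} (h : σ.Perm π) : ∃ n, StepsTo n σ π := by
  induction h with
  | nil => exact ⟨0, rfl⟩
  | cons x _ ih =>
    obtain ⟨n, hn⟩ := ih
    exact ⟨n, hn.cons x⟩
  | swap x y l =>
    by_cases hxy : y = x
    · exact ⟨0, by subst hxy; rfl⟩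
    · exact ⟨1, _, ⟨[], l, y, x, hxy, rfl, rfl⟩, rfl⟩
  | trans _ _ ih₁ ih₂ =>
    obtain ⟨m, hm⟩ := ih₁
    obtain ⟨n, hn⟩ := ih₂
    exact ⟨m + n, hm.trans hn⟩

theorem dK_add_invCount_mod_two {σ π : List ℤ} (h : σ.Perm π) :
    (dK σ π + invCount σ + invCount π) % 2 = 0 :=
  StepsTo.add_invCount_mod_two (Nat.sInf_mem (exists_stepsTo_of_perm h))

/-- Lemma 3. If `σ`, `π`, and `ρ` are three multi-permutations in `S(M)`,
then `d_K(σ, π) + d_K(π, ρ) ≡ d_K(σ, ρ) (mod 2)`. -/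
theorem stmt2 (M : Multiset ℤ) (σ π ρ : List ℤ)
    (hσ : (↑σ : Multiset ℤ) = M) (hπ : (↑π : Multiset ℤ) = M) (hρ : (↑ρ : Multiset ℤ) = M) :
    (dK σ π + dK π ρ) % 2 = dK σ ρ % 2 := by
  have hσπ : σ.Perm π := Multiset.coe_eq_coe.mp (hσ.trans hπ.symm)
  have hπρ : π.Perm ρ := Multiset.coe_eq_coe.mp (hπ.trans hρ.symm)
  have := dK_add_invCount_mod_two hσπ
  have := dK_add_invCount_mod_two hπρ
  have := dK_add_invCount_mod_two (hσπ.trans hπρ)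
  omega
end

section
/- Let M = {v_1^{m_1}, ..., v_ℓ^{m_ℓ}} be a multiset with distinct ranks v_1 < ... < v_ℓ, let n_0 = 0 and n_i = m_1 + ... + m_i. The mapping ψ : S(M) → [Z]^M is bijective. -/
/-!
Deleting every copy of the largest rank from `σ ∈ S(M)` leaves a multi-permutation of the
smaller multiset, which has `n_{ℓ-1}` entries, and the last block of `ψ σ` records how many
of them lie to the right of each deleted copy. These counts form a non-increasing vector over
`{0, …, n_{ℓ-1}}`, and every such vector arises from exactly one way of inserting the copies
back (`insertRank`). Induction on the number of ranks makes `ψ` a bijection.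
-/

section PsiEntry

variable {a x : ℤ} {t σ : List ℤ} {s : ℕ}

theorem psiEntry_eq_idxsOf : psiEntry σ a s =
    (σ.drop (((σ.idxsOf a).getD s σ.length) + 1)).countP (· < a) := rfl

@[simp] theorem psiEntry_nil : psiEntry [] a s = 0 := rfl

@[simp] theorem psiEntry_cons_self_zero : psiEntry (a :: t) a 0 = t.countP (· < a) := by
  simp [psiEntry_eq_idxsOf]

@[simp] theorem psiEntry_cons_self_succ : psiEntry (a :: t) a (s + 1) = psiEntry t a s := by
  simp [psiEntry_eq_idxsOf, List.idxsOf_start (s := 1)]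

theorem psiEntry_cons_of_ne (h : x ≠ a) : psiEntry (x :: t) a s = psiEntry t a s := by
  simp [psiEntry_eq_idxsOf, h, List.idxsOf_start (s := 1)]

theorem psiEntry_le_countP : psiEntry σ a s ≤ σ.countP (· < a) := by
  induction σ generalizing s with
  | nil => simp
  | cons x t ih =>
    rw [List.countP_cons]
    obtain rfl | hx := eq_or_ne x a
    · cases s with
      | zero => simp
      | succ s => simpa using ih
    · rw [psiEntry_cons_of_ne hx]
      exact (ih (s := s)).trans (Nat.le_add_right _ _)

theorem psiEntry_succ_le : psiEntry σ a (s + 1) ≤ psiEntry σ a s := by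
  induction σ generalizing s with
  | nil => simp
  | cons x t ih =>
    obtain rfl | hx := eq_or_ne x a
    · cases s with
      | zero => simpa using psiEntry_le_countP
      | succ s => simpa using ih
    · simpa [psiEntry_cons_of_ne hx] using ih

theorem psiEntry_eq_zero_of_not_mem (h : a ∉ σ) : psiEntry σ a s = 0 := by
  induction σ with
  | nil => rfl
  | cons x t ih =>
    rw [List.mem_cons, not_or] at h
    rw [psiEntry_cons_of_ne (Ne.symm h.1), ih h.2]

theorem psiEntry_filter (p : ℤ → Bool) (h : ∀ x ∈ σ, p x = false → a < x) :
    psiEntry (σ.filter p) a s = psiEntry σ a s := by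
  induction σ generalizing s with
  | nil => rfl
  | cons x t ih =>
    rw [List.forall_mem_cons] at h
    by_cases hp : p x
    · rw [List.filter_cons_of_pos hp]
      obtain rfl | hx := eq_or_ne x a
      · cases s with
        | zero =>
          simp only [psiEntry_cons_self_zero, List.countP_filter]
          refine List.countP_congr fun y hy => ?_
          cases hpy : p y
          · simp [(h.2 y hy hpy).not_gt]
          · simp
        | succ s => simpa using ih h.2
      · simpa [psiEntry_cons_of_ne hx] using ih h.2
    · have hx : x ≠ a := (h.1 (by simpa using hp)).ne'
      rw [List.filter_cons_of_neg hp, psiEntry_cons_of_ne hx, ih h.2]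

end PsiEntry

/-- Inverse of one block of `ψ`: insert copies of `v` into `τ` so that the `s`-th copy has
`cs[s]` entries of `τ` to its right. -/
def insertRank (v : ℤ) : List ℕ → List ℤ → List ℤ
  | [], τ => τ
  | _ :: cs, [] => v :: insertRank v cs []
  | c :: cs, x :: τ =>
    if τ.length < c then v :: insertRank v cs (x :: τ) else x :: insertRank v (c :: cs) τ

section InsertRank

variable {v : ℤ} {cs : List ℕ} {τ σ : List ℤ}

theorem insertRank_perm : (insertRank v cs τ).Perm (List.replicate cs.length v ++ τ) := by
  induction cs, τ using insertRank.induct with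
  | case1 τ => simp [insertRank]
  | case2 c cs ih => simpa [insertRank, List.replicate_succ] using ih
  | case3 c cs x τ h ih => simpa [insertRank, h, List.replicate_succ] using ih
  | case4 c cs x τ h ih =>
    rw [insertRank, if_neg h]
    exact (ih.cons x).trans List.perm_middle.symm

theorem psiEntry_insertRank_of_lt {a : ℤ} (hav : a < v) (s : ℕ) :
    psiEntry (insertRank v cs τ) a s = psiEntry τ a s := by
  induction cs, τ using insertRank.induct generalizing s with
  | case1 τ => rw [insertRank]
  | case2 c cs ih => rw [insertRank, psiEntry_cons_of_ne hav.ne', ih]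
  | case3 c cs x τ h ih => rw [insertRank, if_pos h, psiEntry_cons_of_ne hav.ne', ih]
  | case4 c cs x τ h ih =>
    rw [insertRank, if_neg h]
    obtain rfl | hx := eq_or_ne x a
    · cases s with
      | zero =>
        simp only [psiEntry_cons_self_zero, insertRank_perm.countP_eq, List.countP_append,
          List.countP_replicate]
        simp [hav.not_gt]
      | succ s => simp [ih]
    · rw [psiEntry_cons_of_ne hx, psiEntry_cons_of_ne hx, ih]

theorem countP_lt_insertRank (hτ : ∀ x ∈ τ, x < v) :
    (insertRank v cs τ).countP (· < v) = τ.length := by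
  rw [insertRank_perm.countP_eq, List.countP_append, List.countP_eq_length (l := τ) |>.2 (by simpa)]
  simp

theorem psiEntry_insertRank_self (hτ : ∀ x ∈ τ, x < v) (hcs : cs.Pairwise (· ≥ ·))
    (hbound : ∀ c ∈ cs, c ≤ τ.length) (s : ℕ) :
    psiEntry (insertRank v cs τ) v s = cs.getD s 0 := by
  induction cs, τ using insertRank.induct generalizing s with
  | case1 τ =>
    rw [insertRank, psiEntry_eq_zero_of_not_mem fun h => (hτ v h).false]
    simp
  | case2 c cs ih =>
    rw [insertRank]
    cases s with
    | zero =>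
      have hc : c = 0 := by simpa using hbound c (by simp)
      simp [hc, countP_lt_insertRank]
    | succ s => simpa using ih hτ hcs.of_cons (fun c' h' => hbound c' (List.mem_cons_of_mem _ h')) s
  | case3 c cs x τ h ih =>
    rw [insertRank, if_pos h]
    cases s with
    | zero =>
      have hc : c ≤ τ.length + 1 := by simpa using hbound c (by simp)
      rw [psiEntry_cons_self_zero, countP_lt_insertRank hτ, List.length_cons, List.getD_cons_zero]
      omega
    | succ s => simpa using ih hτ hcs.of_cons (fun c' h' => hbound c' (List.mem_cons_of_mem _ h')) s
  | case4 c cs x τ h ih =>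
    rw [insertRank, if_neg h, psiEntry_cons_of_ne (hτ x (by simp)).ne]
    refine ih (by simp_all) hcs (fun c' hc' => ?_) s
    have : c' ≤ c := (List.mem_cons.1 hc').elim (·.le) fun h' => (List.pairwise_cons.1 hcs).1 c' h'
    omega

theorem map_psiEntry_insertRank_self (hτ : ∀ x ∈ τ, x < v) (hcs : cs.Pairwise (· ≥ ·))
    (hbound : ∀ c ∈ cs, c ≤ τ.length) :
    (List.range cs.length).map (psiEntry (insertRank v cs τ) v) = cs := by
  refine List.ext_getElem (by simp) fun s _ hs => ?_
  rw [List.getElem_map, List.getElem_range, psiEntry_insertRank_self hτ hcs hbound,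
    List.getD_eq_getElem _ _ hs]

theorem insertRank_cons_left {c : ℕ} (h : τ.length ≤ c) :
    insertRank v (c :: cs) τ = v :: insertRank v cs τ := by
  cases τ with
  | nil => rw [insertRank]
  | cons x τ => rw [insertRank, if_pos (by simpa using h)]

theorem insertRank_cons_right {x : ℤ} (h : ∀ c ∈ cs.head?, c ≤ τ.length) :
    insertRank v cs (x :: τ) = x :: insertRank v cs τ := by
  cases cs with
  | nil => simp [insertRank]
  | cons c cs => rw [insertRank, if_neg (by simpa using h)]

theorem insertRank_psiEntry_filter (h : ∀ x ∈ σ, x ≤ v) :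
    insertRank v ((List.range (σ.count v)).map (psiEntry σ v)) (σ.filter (· < v)) = σ := by
  induction σ with
  | nil => simp [insertRank]
  | cons x t ih =>
    rw [List.forall_mem_cons] at h
    obtain rfl | hx := eq_or_ne v x
    · have hlen : (t.filter (· < v)).length ≤ t.countP (· < v) :=
        List.countP_eq_length_filter ▸ le_rfl
      rw [List.count_cons_self, List.range_succ_eq_map, List.map_cons, List.map_map,
        psiEntry_cons_self_zero, List.filter_cons_of_neg (by simp), insertRank_cons_left hlen]
      have hpsi : psiEntry (v :: t) v ∘ Nat.succ = psiEntry t v :=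
        funext fun s => psiEntry_cons_self_succ
      rw [hpsi, ih h.2]
    · have hxv : x < v := lt_of_le_of_ne h.1 hx.symm
      have hpsi : psiEntry (x :: t) v = psiEntry t v :=
        funext fun s => psiEntry_cons_of_ne hx.symm
      rw [List.count_cons_of_ne hx.symm, hpsi, List.filter_cons_of_pos (by simpa using hxv),
        insertRank_cons_right, ih h.2]
      intro c hc
      simp only [List.head?_map, Option.mem_def, Option.map_eq_some_iff] at hc
      obtain ⟨s, -, rfl⟩ := hc
      exact List.countP_eq_length_filter ▸ psiEntry_le_countP

end InsertRank

def rankMultiset (v : ℕ → ℤ) (m : ℕ → ℕ) (ℓ : ℕ) : Multiset ℤ :=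
  ∑ i ∈ Finset.range ℓ, Multiset.replicate (m i) (v i)

section RankMultiset

variable {v : ℕ → ℤ} {m : ℕ → ℕ} {ℓ : ℕ}

theorem rankMultiset_succ :
    rankMultiset v m (ℓ + 1) = rankMultiset v m ℓ + Multiset.replicate (m ℓ) (v ℓ) :=
  Finset.sum_range_succ _ _

theorem card_rankMultiset : Multiset.card (rankMultiset v m ℓ) = ∑ i ∈ Finset.range ℓ, m i := by
  simp [rankMultiset, Multiset.card_sum]

theorem exists_eq_of_mem_rankMultiset {a : ℤ} (ha : a ∈ rankMultiset v m ℓ) :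
    ∃ i < ℓ, v i = a := by
  obtain ⟨i, hi, ha⟩ := Multiset.mem_sum.1 ha
  exact ⟨i, Finset.mem_range.1 hi, (Multiset.eq_of_mem_replicate ha).symm⟩

theorem lt_of_mem_rankMultiset (hv : StrictMonoOn v (Set.Iio (ℓ + 1))) {a : ℤ}
    (ha : a ∈ rankMultiset v m ℓ) : a < v ℓ := by
  obtain ⟨i, hi, rfl⟩ := exists_eq_of_mem_rankMultiset ha
  exact hv (Set.mem_Iio.2 (by omega)) (Set.mem_Iio.2 (by omega)) hi

theorem le_of_mem_rankMultiset_succ (hv : StrictMonoOn v (Set.Iio (ℓ + 1))) {a : ℤ}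
    (ha : a ∈ rankMultiset v m (ℓ + 1)) : a ≤ v ℓ := by
  rw [rankMultiset_succ, Multiset.mem_add] at ha
  exact ha.elim (fun h => (lt_of_mem_rankMultiset hv h).le)
    fun h => (Multiset.eq_of_mem_replicate h).le

theorem count_rankMultiset_succ (hv : StrictMonoOn v (Set.Iio (ℓ + 1))) :
    (rankMultiset v m (ℓ + 1)).count (v ℓ) = m ℓ := by
  rw [rankMultiset_succ, Multiset.count_add, Multiset.count_replicate_self,
    Multiset.count_eq_zero.2 fun h => (lt_of_mem_rankMultiset hv h).false, zero_add]

theorem filter_lt_rankMultiset_succ (hv : StrictMonoOn v (Set.Iio (ℓ + 1))) :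
    (rankMultiset v m (ℓ + 1)).filter (· < v ℓ) = rankMultiset v m ℓ := by
  rw [rankMultiset_succ, Multiset.filter_add,
    Multiset.filter_eq_self.2 fun a ha => lt_of_mem_rankMultiset hv ha,
    Multiset.filter_eq_nil.2 fun a ha => by simp [Multiset.eq_of_mem_replicate ha], add_zero]

theorem countP_lt_rankMultiset (hv : StrictMonoOn v (Set.Iio ℓ)) {i : ℕ} (hi : i < ℓ) :
    (rankMultiset v m ℓ).countP (· < v i) = ∑ j ∈ Finset.range i, m j := by
  have hv' : ∀ {j}, j < ℓ → (v j < v i ↔ j < i) := fun hj => hv.lt_iff_lt hj hi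
  change Multiset.countPAddMonoidHom _ _ = _
  rw [rankMultiset, map_sum, Multiset.coe_countPAddMonoidHom,
    ← Finset.sum_range_add_sum_Ico _ hi.le]
  have hlow : ∀ j ∈ Finset.range i,
      (Multiset.replicate (m j) (v j)).countP (· < v i) = m j := by
    intro j hj
    have hj := Finset.mem_range.1 hj
    refine (Multiset.countP_eq_card (p := fun a : ℤ => a < v i).2 fun a ha => ?_).trans
      (Multiset.card_replicate _ _)
    rwa [Multiset.eq_of_mem_replicate ha, hv' (hj.trans hi)]
  have hhigh : ∀ j ∈ Finset.Ico i ℓ,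
      (Multiset.replicate (m j) (v j)).countP (· < v i) = 0 := by
    intro j hj
    obtain ⟨hij, hjl⟩ := Finset.mem_Ico.1 hj
    refine Multiset.countP_eq_zero (p := fun a : ℤ => a < v i) |>.2 fun a ha h => ?_
    rw [Multiset.eq_of_mem_replicate ha, hv' hjl] at h
    omega
  rw [Finset.sum_congr rfl hlow, Finset.sum_eq_zero hhigh, add_zero]

end RankMultiset

/-- `ψ` for the ranks `v 0 < … < v k`: entry `i` is the block of rank `v (i + 1)`. -/
def psiMap (v : ℕ → ℤ) (m : ℕ → ℕ) (k : ℕ) (σ : List ℤ) : List (List ℕ) :=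
  (List.range k).map fun i => (List.range (m (i + 1))).map (psiEntry σ (v (i + 1)))

/-- Membership in `[Z_{bound+1}]^len`. -/
def IsMonotoneVec (len bound : ℕ) (c : List ℕ) : Prop :=
  c.length = len ∧ c.IsChain (· ≥ ·) ∧ ∀ y ∈ c, y ≤ bound

def psiCodomain (m : ℕ → ℕ) (k : ℕ) : Set (List (List ℕ)) :=
  {x | x.length = k ∧
    ∀ i < k, IsMonotoneVec (m (i + 1)) (∑ j ∈ Finset.range (i + 1), m j) (x.getD i [])}

def psiInv (v : ℕ → ℤ) (m : ℕ → ℕ) (x : List (List ℕ)) : ℕ → List ℤ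
  | 0 => List.replicate (m 0) (v 0)
  | k + 1 => insertRank (v (k + 1)) (x.getD k []) (psiInv v m x k)

section Psi

variable {v : ℕ → ℤ} {m : ℕ → ℕ} {k : ℕ}

theorem psiMap_succ (σ : List ℤ) : psiMap v m (k + 1) σ =
    psiMap v m k σ ++ [(List.range (m (k + 1))).map (psiEntry σ (v (k + 1)))] := by
  simp [psiMap, List.range_succ]

theorem getD_psiMap (σ : List ℤ) {i : ℕ} (hi : i < k) :
    (psiMap v m k σ).getD i [] = (List.range (m (i + 1))).map (psiEntry σ (v (i + 1))) := by
  simp [psiMap, hi]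

theorem concat_mem_psiCodomain_iff {x : List (List ℕ)} {c : List ℕ} :
    x ++ [c] ∈ psiCodomain m (k + 1) ↔
      x ∈ psiCodomain m k ∧ IsMonotoneVec (m (k + 1)) (∑ j ∈ Finset.range (k + 1), m j) c := by
  simp only [psiCodomain, Set.mem_ofPred_eq, List.length_append, List.length_singleton,
    Nat.forall_lt_succ_right]
  constructor
  · rintro ⟨hlen, hlow, htop⟩
    obtain rfl : x.length = k := by omega
    refine ⟨⟨rfl, fun i hi => ?_⟩, by simpa using htop⟩
    rw [← List.getD_append _ [c] _ _ hi]
    exact hlow i hi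
  · rintro ⟨⟨rfl, hlow⟩, htop⟩
    refine ⟨rfl, fun i hi => ?_, by simpa using htop⟩
    rw [List.getD_append _ _ _ _ hi]
    exact hlow i hi

theorem psiInv_append {x y : List (List ℕ)} (h : k ≤ x.length) :
    psiInv v m (x ++ y) k = psiInv v m x k := by
  induction k with
  | zero => rfl
  | succ k ih => rw [psiInv, psiInv, List.getD_append _ _ _ _ h, ih (by omega)]

theorem psiInv_concat {x : List (List ℕ)} (hx : x.length = k) (c : List ℕ) :
    psiInv v m (x ++ [c]) (k + 1) = insertRank (v (k + 1)) c (psiInv v m x k) := by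
  rw [psiInv, psiInv_append hx.ge, List.getD_append_right _ _ _ _ hx.le]
  simp [hx]

theorem psiMap_mem_psiCodomain (hv : StrictMonoOn v (Set.Iio (k + 1))) {σ : List ℤ}
    (hσ : (σ : Multiset ℤ) = rankMultiset v m (k + 1)) : psiMap v m k σ ∈ psiCodomain m k := by
  refine ⟨by simp [psiMap], fun i hi => ?_⟩
  rw [getD_psiMap σ hi]
  refine ⟨by simp, (List.isChain_map _).2 ((List.isChain_range _ _).2 fun s _ => psiEntry_succ_le),
    ?_⟩
  simp only [List.mem_map, List.mem_range, forall_exists_index, and_imp]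
  rintro _ s - rfl
  calc psiEntry σ (v (i + 1)) s ≤ σ.countP (· < v (i + 1)) := psiEntry_le_countP
    _ = ∑ j ∈ Finset.range (i + 1), m j := by
      rw [← Multiset.coe_countP, hσ, countP_lt_rankMultiset hv (by omega)]

theorem psiInv_psiMap (hv : StrictMonoOn v (Set.Iio (k + 1))) {σ : List ℤ}
    (hσ : (σ : Multiset ℤ) = rankMultiset v m (k + 1)) : psiInv v m (psiMap v m k σ) k = σ := by
  induction k generalizing σ with
  | zero =>
    rw [rankMultiset, Finset.sum_range_one, ← Multiset.coe_replicate, Multiset.coe_eq_coe,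
      List.perm_replicate] at hσ
    exact hσ.symm
  | succ k ih =>
    set τ := σ.filter (· < v (k + 1))
    have hτ : (τ : Multiset ℤ) = rankMultiset v m (k + 1) := by
      rw [← Multiset.filter_coe, hσ, filter_lt_rankMultiset_succ hv]
    have hle : ∀ a ∈ σ, a ≤ v (k + 1) := fun a ha =>
      le_of_mem_rankMultiset_succ hv (hσ ▸ Multiset.mem_coe.2 ha)
    have hcount : σ.count (v (k + 1)) = m (k + 1) := by
      rw [← Multiset.coe_count, hσ, count_rankMultiset_succ hv]
    have hblocks : psiMap v m k τ = psiMap v m k σ := by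
      refine List.map_congr_left fun i hi => List.map_congr_left fun s _ =>
        psiEntry_filter _ fun a ha h => ?_
      have hi : i + 1 < k + 1 := by simpa using hi
      exact (hv (Set.mem_Iio.2 (by omega)) (Set.mem_Iio.2 (by omega)) hi).trans_le
        (by simpa using h)
    rw [psiMap_succ, psiInv_concat (by simp [psiMap]), ← hblocks,
      ih (hv.mono (Set.Iio_subset_Iio (by omega))) hτ, ← hcount, insertRank_psiEntry_filter hle]

theorem coe_psiInv {x : List (List ℕ)} (hx : x ∈ psiCodomain m k) :
    (psiInv v m x k : Multiset ℤ) = rankMultiset v m (k + 1) := by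
  induction k generalizing x with
  | zero => simp [psiInv, rankMultiset, Multiset.coe_replicate]
  | succ k ih =>
    obtain ⟨y, c, rfl⟩ := (List.eq_nil_or_concat' x).resolve_left fun h => by
      simp [h, psiCodomain] at hx
    obtain ⟨hy, hc, -⟩ := concat_mem_psiCodomain_iff.1 hx
    rw [psiInv_concat hy.1, Multiset.coe_eq_coe.2 insertRank_perm, ← Multiset.coe_add, ih hy,
      rankMultiset_succ (ℓ := k + 1), Multiset.coe_replicate, hc, add_comm]

theorem psiMap_psiInv (hv : StrictMonoOn v (Set.Iio (k + 1))) {x : List (List ℕ)}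
    (hx : x ∈ psiCodomain m k) : psiMap v m k (psiInv v m x k) = x := by
  induction k generalizing x with
  | zero =>
    obtain rfl := List.eq_nil_of_length_eq_zero hx.1
    rfl
  | succ k ih =>
    obtain ⟨y, c, rfl⟩ := (List.eq_nil_or_concat' x).resolve_left fun h => by
      simp [h, psiCodomain] at hx
    obtain ⟨hy, hlen, hchain, hbound⟩ := concat_mem_psiCodomain_iff.1 hx
    set τ := psiInv v m y k
    have hτ := coe_psiInv (v := v) hy
    have hτlt : ∀ a ∈ τ, a < v (k + 1) := fun a ha =>
      lt_of_mem_rankMultiset hv (hτ ▸ Multiset.mem_coe.2 ha)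
    have hτlen : τ.length = ∑ j ∈ Finset.range (k + 1), m j := by
      rw [← Multiset.coe_card, hτ, card_rankMultiset]
    have hlow : psiMap v m k (insertRank (v (k + 1)) c τ) = psiMap v m k τ :=
      List.map_congr_left fun i hi => List.map_congr_left fun s _ => by
        have hi : i + 1 < k + 1 := by simpa using hi
        exact psiEntry_insertRank_of_lt
          (hv (Set.mem_Iio.2 (by omega)) (Set.mem_Iio.2 (by omega)) hi) s
    rw [psiInv_concat hy.1, psiMap_succ, hlow, ih (hv.mono (Set.Iio_subset_Iio (by omega))) hy,
      ← hlen, map_psiEntry_insertRank_self hτlt (List.isChain_iff_pairwise.1 hchain)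
        (hτlen ▸ hbound)]

theorem psiMap_bijOn (hv : StrictMonoOn v (Set.Iio (k + 1))) :
    Set.BijOn (psiMap v m k) {σ | (σ : Multiset ℤ) = rankMultiset v m (k + 1)}
      (psiCodomain m k) :=
  Set.InvOn.bijOn ⟨fun _ hσ => psiInv_psiMap hv hσ, fun _ hx => psiMap_psiInv hv hx⟩
    (fun _ hσ => psiMap_mem_psiCodomain hv hσ) fun _ hx => coe_psiInv hx

end Psi

theorem stmt4_general (ℓ : ℕ) (v : ℕ → ℤ) (m : ℕ → ℕ)
    (hv : ∀ i j, i < j → j < ℓ → v i < v j) :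
    Set.BijOn
      (fun σ => ((List.range ℓ).drop 1).map
        (fun i => (List.range (m i)).map (fun s => psiEntry σ (v i) s)))
      {σ : List ℤ | (↑σ : Multiset ℤ) = ∑ i ∈ Finset.range ℓ, Multiset.replicate (m i) (v i)}
      {x : List (List ℕ) | x.length = ℓ - 1 ∧ ∀ i, 1 ≤ i → i < ℓ →
        (x.getD (i - 1) []).length = m i ∧
        List.Chain' (· ≥ ·) (x.getD (i - 1) []) ∧
        ∀ y ∈ x.getD (i - 1) [], y ≤ ∑ j ∈ Finset.range i, m j} := by
  cases ℓ with
  | zero => simp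
  | succ k =>
    convert psiMap_bijOn (m := m) fun i _ j hj hij => hv i j hij hj using 1
    · funext σ
      simp [psiMap, List.range_succ_eq_map]
    · rfl
    · ext x
      refine and_congr Iff.rfl ⟨fun h i hi => h (i + 1) (by omega) (by omega), fun h i h₁ h₂ => ?_⟩
      obtain ⟨i, rfl⟩ := Nat.exists_eq_add_of_le' h₁
      exact h i (by omega)

/-- Lemma 4. Let `M = {v 0 ^ m 0, …, v (ℓ-1) ^ m (ℓ-1)}` with distinct ranks
`v 0 < … < v (ℓ-1)` and positive multiplicities, and let `n_i = m 0 + … + m (i-1)`.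
The mapping `ψ : S(M) → [Z]^M`, sending `σ` to the tuple of blocks
`x_i = (x_{i,1}, …, x_{i,m_i})` for `i = 1, …, ℓ-1` (paper indices `2, …, ℓ`), where
`x_{i,s}` counts the elements smaller than `v i` to the right of the `s`-th occurrence of
`v i` in `σ`, is a bijection onto
`[Z]^M = [Z_{n_1+1}]^{m_2} × … × [Z_{n_{ℓ-1}+1}]^{m_ℓ}` (each block being a monotone
non-increasing vector of length `m i` with entries in `{0, …, n_i}`). -/
theorem stmt4 (ℓ : ℕ) (v : ℕ → ℤ) (m : ℕ → ℕ)
    (hv : ∀ i j, i < j → j < ℓ → v i < v j)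
    (hm : ∀ i, i < ℓ → 0 < m i) :
    Set.BijOn
      (fun σ => ((List.range ℓ).drop 1).map
        (fun i => (List.range (m i)).map (fun s => psiEntry σ (v i) s)))
      {σ : List ℤ | (↑σ : Multiset ℤ) = ∑ i ∈ Finset.range ℓ, Multiset.replicate (m i) (v i)}
      {x : List (List ℕ) | x.length = ℓ - 1 ∧ ∀ i, 1 ≤ i → i < ℓ →
        (x.getD (i - 1) []).length = m i ∧
        List.Chain' (· ≥ ·) (x.getD (i - 1) []) ∧
        ∀ y ∈ x.getD (i - 1) [], y ≤ ∑ j ∈ Finset.range i, m j} :=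
  stmt4_general ℓ v m hv
end

section
/- For every positive integer N, the code C_L = { x ∈ (Z_{2N+1})^N : Σ_{i=1}^{N} i·x_i ≡ 0 (mod 2N+1) } is a perfect linear single-error-correcting code in (Z_{2N+1})^N with the Lee metric; that is, the balls of Lee radius 1 around the codewords of C_L partition (Z_{2N+1})^N. -/
open Matrix

namespace ZMod

variable {q : ℕ} [NeZero q]

lemma min_val_val_neg (a : ZMod q) : min a.val (-a).val = a.valMinAbs.natAbs := by
  rw [valMinAbs_natAbs_eq_min, neg_val]
  split_ifs with h <;> simp [h]

lemma natAbs_valMinAbs_intCast_le (a : ℤ) : (a : ZMod q).valMinAbs.natAbs ≤ a.natAbs :=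
  natAbs_min_of_le_div_two q _ _ (coe_valMinAbs _) (natAbs_valMinAbs_le _)

end ZMod

section LeeWeight

variable {ι : Type*} [Fintype ι] {q : ℕ}

def leeWeight (x : ι → ZMod q) : ℕ := ∑ i, (x i).valMinAbs.natAbs

@[simp]
lemma leeWeight_neg (x : ι → ZMod q) : leeWeight (-x) = leeWeight x := by
  simp [leeWeight]

lemma leeWeight_add_le (x y : ι → ZMod q) : leeWeight (x + y) ≤ leeWeight x + leeWeight y := by
  rw [leeWeight, leeWeight, leeWeight, ← Finset.sum_add_distrib]
  exact Finset.sum_le_sum fun i _ =>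
    (ZMod.natAbs_valMinAbs_add_le _ _).trans (Int.natAbs_add_le _ _)

lemma leeWeight_single [DecidableEq ι] (i : ι) (a : ZMod q) :
    leeWeight (Pi.single i a) = a.valMinAbs.natAbs := by
  rw [leeWeight, Finset.sum_eq_single i (fun j _ hj => by simp [hj]) (by simp)]
  simp

end LeeWeight

section LeeDistance

variable {q N : ℕ} [NeZero q]

lemma zmodLee_eq_leeWeight_sub (x y : Fin N → ZMod q) : zmodLee x y = leeWeight (x - y) := by
  refine Finset.sum_congr rfl fun i _ => ?_
  rw [← neg_sub (x i), ZMod.min_val_val_neg]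
  rfl

lemma zmodLee_comm (x y : Fin N → ZMod q) : zmodLee x y = zmodLee y x := by
  rw [zmodLee_eq_leeWeight_sub, zmodLee_eq_leeWeight_sub, ← neg_sub, leeWeight_neg]

lemma zmodLee_triangle (x y z : Fin N → ZMod q) : zmodLee x z ≤ zmodLee x y + zmodLee y z := by
  simpa only [zmodLee_eq_leeWeight_sub, sub_add_sub_cancel] using leeWeight_add_le (x - y) (y - z)

end LeeDistance

lemma abs_sum_succ_mul_le {N : ℕ} (m : Fin N → ℤ) :
    |∑ i : Fin N, ((i : ℕ) + 1 : ℤ) * m i| ≤ N * ∑ i, |m i| := by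
  rw [Finset.mul_sum]
  refine (Finset.abs_sum_le_sum_abs _ _).trans (Finset.sum_le_sum fun i _ => ?_)
  rw [abs_mul, abs_of_pos (by positivity)]
  have : (i : ℤ) + 1 ≤ N := by exact_mod_cast i.isLt
  exact mul_le_mul_of_nonneg_right this (abs_nonneg _)

lemma eq_zero_of_sum_abs_le_two_of_sum_succ_mul_eq_zero :
    ∀ {N : ℕ} (m : Fin N → ℤ), ∑ i, |m i| ≤ 2 → ∑ i : Fin N, ((i : ℕ) + 1 : ℤ) * m i = 0 → m = 0
  | 0, m, _, _ => Subsingleton.elim _ _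
  | N + 1, m, hm, hS => by
    rw [Fin.sum_univ_castSucc] at hm hS
    simp only [Fin.val_castSucc, Fin.val_last] at hS
    by_cases hlast : m (Fin.last N) = 0
    · rw [hlast, abs_zero, add_zero] at hm
      rw [hlast, mul_zero, add_zero] at hS
      have hinit := eq_zero_of_sum_abs_le_two_of_sum_succ_mul_eq_zero _ hm hS
      funext i
      induction i using Fin.lastCases with
      | last => exact hlast
      | cast i => exact congrFun hinit i
    · -- `|(N + 1) * m last| ≥ N + 1`, while the other terms contribute at most `N * (2 - 1)`
      have hbound := abs_sum_succ_mul_le (fun i => m i.castSucc)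
      have hpos : 1 ≤ |m (Fin.last N)| := Int.one_le_abs hlast
      rw [eq_neg_of_add_eq_zero_left hS, abs_neg, abs_mul, abs_of_pos (by positivity)] at hbound
      nlinarith

def checkVector (q N : ℕ) : Fin N → ZMod q := fun i => ((i.val + 1 : ℕ) : ZMod q)

section CheckVector

variable {N : ℕ}

lemma intCast_sum_succ_mul_valMinAbs {q : ℕ} (x : Fin N → ZMod q) :
    ((∑ i : Fin N, ((i : ℕ) + 1 : ℤ) * (x i).valMinAbs : ℤ) : ZMod q) =
      checkVector q N ⬝ᵥ x := by
  simp [checkVector, dotProduct, ZMod.coe_valMinAbs]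

theorem eq_zero_of_leeWeight_le_two (x : Fin N → ZMod (2 * N + 1))
    (hx : checkVector _ N ⬝ᵥ x = 0) (hw : leeWeight x ≤ 2) : x = 0 := by
  set m : Fin N → ℤ := fun i => (x i).valMinAbs
  have hm : ∑ i, |m i| ≤ 2 := by
    have hw' : ((leeWeight x : ℕ) : ℤ) ≤ 2 := by exact_mod_cast hw
    simpa only [leeWeight, Nat.cast_sum, Int.natCast_natAbs] using hw'
  have hS : ∑ i : Fin N, ((i : ℕ) + 1 : ℤ) * m i = 0 := by
    refine Int.eq_zero_of_abs_lt_dvd (m := 2 * N + 1) ?_ ?_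
    · exact_mod_cast (ZMod.intCast_zmod_eq_zero_iff_dvd _ _).1
        ((intCast_sum_succ_mul_valMinAbs x).trans hx)
    · have := abs_sum_succ_mul_le m
      nlinarith
  funext i
  simpa [m] using congrFun (eq_zero_of_sum_abs_le_two_of_sum_succ_mul_eq_zero m hm hS) i

theorem exists_leeWeight_le_one_checkVector_dotProduct_eq (s : ZMod (2 * N + 1)) :
    ∃ e, leeWeight e ≤ 1 ∧ checkVector _ N ⬝ᵥ e = s := by
  obtain hs | hs := eq_or_ne s.valMinAbs 0
  · exact ⟨0, by simp [leeWeight], by simp_all⟩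
  -- with `t = s.valMinAbs ∈ [-N, N]`, the error is `sign t` in coordinate `|t| - 1`
  have hle : s.valMinAbs.natAbs ≤ N := by
    have := ZMod.natAbs_valMinAbs_le s
    omega
  have hpos : 0 < s.valMinAbs.natAbs := Int.natAbs_pos.2 hs
  refine ⟨Pi.single ⟨s.valMinAbs.natAbs - 1, by omega⟩ (s.valMinAbs.sign : ZMod _), ?_, ?_⟩
  · rw [leeWeight_single]
    refine (ZMod.natAbs_valMinAbs_intCast_le _).trans ?_
    rw [Int.natAbs_sign_of_ne_zero hs]
  · rw [dotProduct_single, checkVector]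
    calc ((s.valMinAbs.natAbs - 1 + 1 : ℕ) : ZMod (2 * N + 1)) * (s.valMinAbs.sign : ZMod _)
        = ((s.valMinAbs.sign * s.valMinAbs.natAbs : ℤ) : ZMod _) := by
          rw [Nat.sub_add_cancel hpos, Int.cast_mul, Int.cast_natCast]; exact mul_comm _ _
      _ = s := by rw [Int.sign_mul_natAbs, ZMod.coe_valMinAbs]

theorem eq_of_zmodLee_le_two {x y : Fin N → ZMod (2 * N + 1)}
    (hx : checkVector _ N ⬝ᵥ x = 0) (hy : checkVector _ N ⬝ᵥ y = 0) (hxy : zmodLee x y ≤ 2) :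
    x = y :=
  sub_eq_zero.1 <| eq_zero_of_leeWeight_le_two _ (by rw [dotProduct_sub, hx, hy, sub_zero])
    (zmodLee_eq_leeWeight_sub x y ▸ hxy)

end CheckVector

theorem stmt7_general (N : ℕ)
    (C : Set (Fin N → ZMod (2 * N + 1)))
    (hC : C = {x : Fin N → ZMod (2 * N + 1) |
      ∑ i : Fin N, ((i.val + 1 : ℕ) : ZMod (2 * N + 1)) * x i = 0}) :
    (∀ x ∈ C, ∀ y ∈ C, x + y ∈ C) ∧
    (∀ a : ZMod (2 * N + 1), ∀ x ∈ C, a • x ∈ C) ∧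
    (∀ x ∈ C, ∀ y ∈ C, x ≠ y → 3 ≤ zmodLee x y) ∧
    (∀ y : Fin N → ZMod (2 * N + 1), ∃! c, c ∈ C ∧ zmodLee c y ≤ 1) := by
  have hmem (x) : x ∈ C ↔ checkVector _ N ⬝ᵥ x = 0 := by rw [hC]; rfl
  simp only [hmem]
  refine ⟨fun x hx y hy => ?_, fun a x hx => ?_, fun x hx y hy hxy => ?_, fun y => ?_⟩
  · rw [dotProduct_add, hx, hy, add_zero]
  · rw [dotProduct_smul, hx, smul_zero]
  · by_contra! h
    exact hxy (eq_of_zmodLee_le_two hx hy (by omega))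
  · obtain ⟨e, he, hey⟩ := exists_leeWeight_le_one_checkVector_dotProduct_eq (checkVector _ N ⬝ᵥ y)
    have hcode : checkVector _ N ⬝ᵥ (y - e) = 0 := by rw [dotProduct_sub, hey, sub_self]
    have hdist : zmodLee y (y - e) ≤ 1 := by rwa [zmodLee_eq_leeWeight_sub, sub_sub_cancel]
    refine ⟨y - e, ⟨hcode, by rwa [zmodLee_comm]⟩, fun c ⟨hc, hcy⟩ => ?_⟩
    have := zmodLee_triangle c y (y - e)
    exact eq_of_zmodLee_le_two hc hcode (by omega)

/-- Theorem 2, Golomb–Welch. For every positive integer `N`, the code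
`C_L = {x ∈ (Z_{2N+1})^N : ∑ i·x_i ≡ 0 (mod 2N+1)}` is a perfect linear
single-error-correcting code in `(Z_{2N+1})^N` with the Lee metric: it is linear, distinct
codewords are at Lee distance at least `3`, and every vector of `(Z_{2N+1})^N` is within
Lee distance `1` of exactly one codeword. -/
theorem stmt7 (N : ℕ) (hN : 0 < N)
    (C : Set (Fin N → ZMod (2 * N + 1)))
    (hC : C = {x : Fin N → ZMod (2 * N + 1) |
      ∑ i : Fin N, ((i.val + 1 : ℕ) : ZMod (2 * N + 1)) * x i = 0}) :
    (∀ x ∈ C, ∀ y ∈ C, x + y ∈ C) ∧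
    (∀ a : ZMod (2 * N + 1), ∀ x ∈ C, a • x ∈ C) ∧
    (∀ x ∈ C, ∀ y ∈ C, x ≠ y → 3 ≤ zmodLee x y) ∧
    (∀ y : Fin N → ZMod (2 * N + 1), ∃! c, c ∈ C ∧ zmodLee c y ≤ 1) :=
  stmt7_general N C hC
end

section
/- Let q ≥ N and let h_1, ..., h_N be integers with 0 < h_i < q for all i. Assume that for every integer vector e ∈ Z^N with Manhattan weight ||e|| ≤ t, the sums Σ_{i=1}^{N} e_i·h_i are all distinct modulo q (distinct e with ||e|| ≤ t give distinct residues). Then the code C = { x ∈ (Z_q)^N : Σ_{i=1}^{N} x_i·h_i ≡ 0 (mod q) } is a linear t-error-correcting code in (Z_q)^N with the Lee metric, i.e., its minimum Lee distance is at least 2t+1. -/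
/-! Lift the difference of two codewords `x - y` to its centred representative `e ∈ ℤ^N`, whose
Manhattan weight is the Lee distance of `x` and `y` and whose syndrome `∑ e i * h i` vanishes
modulo `q`. If the distance were at most `2t`, then `e = f - g` with `f` and `g` of weight at
most `t` and equal syndromes, so `f = g`, i.e. `x = y`. -/

theorem ZMod.natAbs_valMinAbs {n : ℕ} (a : ZMod n) :
    a.valMinAbs.natAbs = min a.val (-a).val := by
  rcases eq_zero_or_neZero n with rfl | _
  · simp only [valMinAbs_def_zero, val_neg', min_self]; rfl
  · rw [valMinAbs_natAbs_eq_min, neg_val]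
    split_ifs with ha <;> simp [ha]

theorem Int.exists_natAbs_eq_min_natAbs_add_natAbs_sub_eq (z : ℤ) (a : ℕ) :
    ∃ u : ℤ, u.natAbs = min z.natAbs a ∧ u.natAbs + (u - z).natAbs = z.natAbs := by
  rcases Int.natAbs_eq z with hz | hz
  · exact ⟨min z.natAbs a, by omega⟩
  · exact ⟨-(min z.natAbs a : ℕ), by omega⟩

theorem Finset.exists_sum_natAbs_le_sum_natAbs_sub_le {ι : Type*} [DecidableEq ι]
    (s : Finset ι) (e : ι → ℤ) {a b : ℕ} (h : ∑ i ∈ s, (e i).natAbs ≤ a + b) :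
    ∃ f : ι → ℤ, ∑ i ∈ s, (f i).natAbs ≤ a ∧ ∑ i ∈ s, (f i - e i).natAbs ≤ b := by
  induction s using Finset.induction_on generalizing a b with
  | empty => exact ⟨0, by simp⟩
  | insert j s hj ih =>
    rw [sum_insert hj] at h
    obtain ⟨u, hu, huv⟩ := Int.exists_natAbs_eq_min_natAbs_add_natAbs_sub_eq (e j) a
    obtain ⟨f, hfa, hfb⟩ := ih (a := a - u.natAbs) (b := b - (u - e j).natAbs) (by omega)
    refine ⟨Function.update f j u, ?_, ?_⟩
    all_goals
      rw [sum_insert hj, Function.update_self,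
        sum_congr rfl fun i hi => by rw [Function.update_of_ne (ne_of_mem_of_not_mem hi hj)]]
      omega

theorem zmodLee_eq_sum_natAbs_valMinAbs {q N : ℕ} (x y : Fin N → ZMod q) :
    zmodLee x y = ∑ i, (x i - y i).valMinAbs.natAbs := by
  simp only [zmodLee, ZMod.natAbs_valMinAbs, neg_sub]

theorem two_mul_add_one_le_zmodLee {q N t : ℕ} (h : Fin N → ℤ)
    (hdist : ∀ e e' : Fin N → ℤ,
      (∑ i, (e i).natAbs) ≤ t → (∑ i, (e' i).natAbs) ≤ t →
      Int.ModEq (q : ℤ) (∑ i, e i * h i) (∑ i, e' i * h i) → e = e')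
    {x y : Fin N → ZMod q} (hx : ∑ i, x i * ((h i : ℤ) : ZMod q) = 0)
    (hy : ∑ i, y i * ((h i : ℤ) : ZMod q) = 0) (hne : x ≠ y) :
    2 * t + 1 ≤ zmodLee x y := by
  by_contra! hlt
  set e : Fin N → ℤ := fun i => (x i - y i).valMinAbs
  have he : ∑ i, (e i).natAbs ≤ t + t := by
    rw [← zmodLee_eq_sum_natAbs_valMinAbs]; omega
  obtain ⟨f, hf, hfe⟩ := Finset.univ.exists_sum_natAbs_le_sum_natAbs_sub_le e he
  have hsyndrome : ((∑ i, e i * h i : ℤ) : ZMod q) = 0 := by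
    simp only [e, Int.cast_sum, Int.cast_mul, ZMod.coe_valMinAbs, sub_mul,
      Finset.sum_sub_distrib, hx, hy, sub_zero]
  have hmod : Int.ModEq (q : ℤ) (∑ i, f i * h i) (∑ i, (f - e) i * h i) := by
    rw [← ZMod.intCast_eq_intCast_iff]
    simp only [Pi.sub_apply, sub_mul, Finset.sum_sub_distrib, Int.cast_sub, hsyndrome, sub_zero]
  have he0 : e = 0 := sub_eq_self.mp (hdist f (f - e) hf hfe hmod).symm
  refine hne (funext fun i => sub_eq_zero.mp ?_)
  simpa [e] using congrFun he0 i

theorem stmt9_general (q N t : ℕ) (h : Fin N → ℤ)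
    (hdist : ∀ e e' : Fin N → ℤ,
      (∑ i, (e i).natAbs) ≤ t → (∑ i, (e' i).natAbs) ≤ t →
      Int.ModEq (q : ℤ) (∑ i, e i * h i) (∑ i, e' i * h i) → e = e')
    (C : Set (Fin N → ZMod q))
    (hC : C = {x : Fin N → ZMod q | ∑ i, x i * ((h i : ℤ) : ZMod q) = 0}) :
    (∀ x ∈ C, ∀ y ∈ C, x + y ∈ C) ∧
    (∀ a : ZMod q, ∀ x ∈ C, a • x ∈ C) ∧
    (∀ x ∈ C, ∀ y ∈ C, x ≠ y → 2 * t + 1 ≤ zmodLee x y) := by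
  subst hC
  refine ⟨fun x hx y hy => ?_, fun a x hx => ?_,
    fun x hx y hy => two_mul_add_one_le_zmodLee h hdist hx hy⟩
  · simp only [Set.mem_ofPred_eq, Pi.add_apply, add_mul, Finset.sum_add_distrib] at hx hy ⊢
    rw [hx, hy, add_zero]
  · simp only [Set.mem_ofPred_eq, Pi.smul_apply, smul_eq_mul, mul_assoc] at hx ⊢
    rw [← Finset.mul_sum, hx, mul_zero]

/-- Theorem 3, Varshamov–Tenengolts. Let `q ≥ N` and let
`h 0, …, h (N-1)` be integers with `0 < h i < q`.  Assume that for every integer vector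
`e ∈ Z^N` of Manhattan weight at most `t` the sums `∑ e i · h i` are all distinct modulo
`q`.  Then the code `C = {x ∈ (Z_q)^N : ∑ x i · h i ≡ 0 (mod q)}` is a linear
`t`-error-correcting code in `(Z_q)^N` with the Lee metric: it is linear and distinct
codewords are at Lee distance at least `2t + 1`. -/
theorem stmt9 (q N t : ℕ) (hqN : N ≤ q) (h : Fin N → ℤ)
    (hh : ∀ i, 0 < h i ∧ h i < (q : ℤ))
    (hdist : ∀ e e' : Fin N → ℤ,
      (∑ i, (e i).natAbs) ≤ t → (∑ i, (e' i).natAbs) ≤ t →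
      Int.ModEq (q : ℤ) (∑ i, e i * h i) (∑ i, e' i * h i) → e = e')
    (C : Set (Fin N → ZMod q))
    (hC : C = {x : Fin N → ZMod q | ∑ i, x i * ((h i : ℤ) : ZMod q) = 0}) :
    (∀ x ∈ C, ∀ y ∈ C, x + y ∈ C) ∧
    (∀ a : ZMod q, ∀ x ∈ C, a • x ∈ C) ∧
    (∀ x ∈ C, ∀ y ∈ C, x ≠ y → 2 * t + 1 ≤ zmodLee x y) :=
  stmt9_general q N t h hdist C hC
end
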